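/- arXiv:math/0411136 — 2 statements merged into one kernel-verified Lean document; each statement's English description precedes it below -/
import Mathlib

section
/- Noncommutative Chu–Vandermonde summation of type II: Let A and C be elements of a unit ring R and let n be a nonnegative integer. Then Σ_{k=0}^{n} ⌊A, −nI; C, I; I⌉_k = ⌊C−A+I; C⌉_n · (C−A+nI)^{−1} · (C−A), i.e. the terminating noncommutative hypergeometric series of type II, ₂F₁⌊A, −nI; C; I⌉, equals the type II noncommutative shifted factorial ⌊C−A+I; C⌉_n = ∏_{j=1}^{n} (C+(j−1)I)^{−1}(C−A+jI) multiplied on the right by (C−A+nI)^{−1}(C−A). -/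
/-- Ordered (noncommutative) product `f 0 * f 1 * ⋯ * f (n-1)`. -/
def opr {R : Type*} [Ring R] (n : ℕ) (f : ℕ → R) : R :=
  ((List.range n).map f).prod

section aux
variable {R : Type*} [Ring R]

lemma opr_zero (f : ℕ → R) : opr 0 f = 1 := by simp [opr]

lemma opr_succ (n : ℕ) (f : ℕ → R) : opr (n+1) f = opr n f * f n := by
  simp [opr, List.range_succ]

lemma opr_succ_left (n : ℕ) (f : ℕ → R) :
    opr (n+1) f = f 0 * opr n (fun j => f (j+1)) := by
  simp [opr, List.range_succ_eq_map, List.map_map, Function.comp_def]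

lemma opr_congr (n : ℕ) {f g : ℕ → R} (h : ∀ j, j < n → f j = g j) :
    opr n f = opr n g := by
  unfold opr; congr 1
  exact List.map_congr_left fun j hj => h j (List.mem_range.mp hj)

lemma central_ringInverse {a : R} (ha : ∀ y : R, Commute a y) (y : R) :
    Commute (Ring.inverse a) y := by
  by_cases h : IsUnit a
  · obtain ⟨u, rfl⟩ := h
    rw [Ring.inverse_unit]
    exact Commute.units_inv_left (ha y)
  · rw [Ring.inverse_non_unit _ h]; exact Commute.zero_left y

/-- `⌊A; C⌉_k`, the basic type-II shifted factorial. -/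
noncomputable def ncP (A C : R) (k : ℕ) : R :=
  opr k (fun j => Ring.inverse (C + (j : R)) * (A + (j : R)))

/-- `⌊C−A+1; C⌉_m`. -/
noncomputable def ncQ (A C : R) (m : ℕ) : R :=
  opr m (fun j => Ring.inverse (C + (j : R)) * (C - A + (j : R) + 1))

/-- The binomial sum. -/
noncomputable def ncS (A C : R) (n : ℕ) : R :=
  ∑ k ∈ Finset.range (n + 1), (-1 : R) ^ k * (n.choose k : R) * ncP A C k

lemma ncP_succ_left (A C : R) (k : ℕ) :
    ncP A C (k+1) = Ring.inverse C * A * ncP (A+1) (C+1) k := by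
  unfold ncP
  rw [opr_succ_left]
  simp only [Nat.cast_zero, add_zero, Nat.cast_add, Nat.cast_one]
  rw [mul_assoc, mul_assoc]
  congr 2
  apply opr_congr
  intro j _
  have h1 : C + ((j:R) + 1) = C + 1 + (j:R) := by abel
  have h2 : A + ((j:R) + 1) = A + 1 + (j:R) := by abel
  rw [h1, h2]

lemma ncQ_succ (A C : R) (m : ℕ) :
    ncQ A C (m+1) = ncQ A C m * (Ring.inverse (C + (m : R)) * (C - A + (m : R) + 1)) :=
  opr_succ m _

lemma ncQ_shift_succ (A C : R) (m : ℕ) :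
    ncQ (A+1) (C+1) (m+1)
      = ncQ (A+1) (C+1) m * (Ring.inverse (C + ((m:R)+1)) * (C - A + (m : R) + 1)) := by
  rw [ncQ_succ]
  have h1 : C + 1 + (m:R) = C + ((m:R) + 1) := by abel
  have h2 : C + 1 - (A + 1) + (m:R) + 1 = C - A + (m:R) + 1 := by abel
  rw [h1, h2]

lemma scalar_step (n k : ℕ) (hk : k + 1 ≤ n) (hu : IsUnit ((1:R) + (k:R)))
    (hcomm : Ring.inverse ((1:R)+(k:R)) * (-(n:R)+(k:R))
      = (-(n:R)+(k:R)) * Ring.inverse ((1:R)+(k:R))) :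
    (-1:R)^k * (n.choose k : R) * (Ring.inverse ((1:R)+(k:R)) * (-(n:R)+(k:R)))
    = (-1:R)^(k+1) * (n.choose (k+1) : R) := by
  have hZ : ((-1:ℤ)^(k+1) * (n.choose (k+1):ℤ)) * ((1:ℤ)+(k:ℤ))
      = ((-1:ℤ)^k * (n.choose k : ℤ)) * (-(n:ℤ)+(k:ℤ)) := by
    have h1 := Nat.choose_succ_right_eq n k
    have h2 := congrArg (Nat.cast (R := ℤ)) h1
    push_cast [Nat.cast_sub (show k ≤ n by omega)] at h2
    linear_combination (-(-1:ℤ)^k) * h2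
  have key : ((-1:R)^(k+1) * (n.choose (k+1):R)) * ((1:R)+(k:R))
      = ((-1:R)^k * (n.choose k : R)) * (-(n:R)+(k:R)) := by
    have h3 := congrArg (fun z : ℤ => (z : R)) hZ
    push_cast at h3
    exact h3
  rw [mul_assoc, hcomm, ← mul_assoc, ← mul_assoc, ← key]
  exact Ring.mul_inverse_cancel_right _ _ hu

lemma term_eq (A C : R) (n : ℕ) (hI : ∀ m : ℕ, m < n → IsUnit ((1:R)+(m:R))) :
    ∀ k, k ≤ n →
    opr k (fun j => Ring.inverse (C + (j:R)) * (A + (j:R)) *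
        (Ring.inverse ((1:R)+(j:R)) * (-(n:R)+(j:R))))
    = (-1:R)^k * (n.choose k : R) * ncP A C k := by
  intro k
  induction k with
  | zero => intro _; simp [opr_zero, ncP]
  | succ k ih =>
    intro hk
    rw [opr_succ, ih (by omega)]
    have hcen : ∀ y : R,
        Commute (Ring.inverse ((1:R)+(k:R)) * (-(n:R)+(k:R))) y := by
      intro y
      apply Commute.mul_left
      · exact central_ringInverse
          (fun z => (Commute.one_left z).add_left (Nat.cast_commute k z)) y
      · exact ((Nat.cast_commute n y).neg_left).add_left (Nat.cast_commute k y)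
    have hcomm : Ring.inverse ((1:R)+(k:R)) * (-(n:R)+(k:R))
        = (-(n:R)+(k:R)) * Ring.inverse ((1:R)+(k:R)) := by
      exact (central_ringInverse
        (fun z => (Commute.one_left z).add_left (Nat.cast_commute k z))
        (-(n:R)+(k:R))).eq
    set u := Ring.inverse ((1:R)+(k:R)) * (-(n:R)+(k:R)) with hu
    set X := Ring.inverse (C + (k:R)) * (A + (k:R)) with hX
    have hP : ncP A C (k+1) = ncP A C k * X := opr_succ k _
    have h1 : ncP A C k * (X * u) = u * (ncP A C k * X) := by
      rw [← mul_assoc, ← (hcen (ncP A C k * X)).eq]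
    calc (-1:R)^k * (n.choose k : R) * ncP A C k * (X * u)
        = (-1:R)^k * (n.choose k : R) * (ncP A C k * (X * u)) := by
          rw [mul_assoc]
      _ = (-1:R)^k * (n.choose k : R) * (u * (ncP A C k * X)) := by rw [h1]
      _ = ((-1:R)^k * (n.choose k : R) * u) * ncP A C (k+1) := by
          rw [hP]; simp only [mul_assoc]
      _ = (-1:R)^(k+1) * (n.choose (k+1) : R) * ncP A C (k+1) := by
          rw [hu, scalar_step n k hk (hI k (by omega)) hcomm]

lemma ncS_rec (A C : R) (n : ℕ) :
    ncS A C (n+1) = ncS A C n - Ring.inverse C * A * ncS (A+1) (C+1) n := by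
  set B := Ring.inverse C * A with hB
  have hsplit : ncS A C (n+1)
      = (∑ i ∈ Finset.range (n+1),
          (-1:R)^(i+1) * (((n+1).choose (i+1) : ℕ) : R) * ncP A C (i+1))
        + (-1:R)^0 * (((n+1).choose 0 : ℕ) : R) * ncP A C 0 :=
    Finset.sum_range_succ' _ (n+1)
  have hterm : ∀ i : ℕ,
      (-1:R)^(i+1) * (((n+1).choose (i+1) : ℕ) : R) * ncP A C (i+1)
      = (-1:R)^(i+1) * (n.choose i : R) * (B * ncP (A+1) (C+1) i)
        + (-1:R)^(i+1) * (n.choose (i+1) : R) * ncP A C (i+1) := by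
    intro i
    rw [Nat.choose_succ_succ, Nat.cast_add, mul_add, add_mul, ncP_succ_left, hB]
  have hmove : ∀ i : ℕ,
      (-1:R)^(i+1) * (n.choose i : R) * (B * ncP (A+1) (C+1) i)
      = -(B * ((-1:R)^i * (n.choose i : R) * ncP (A+1) (C+1) i)) := by
    intro i
    have c1 : Commute ((-1:R)^i * (n.choose i : R)) B :=
      ((Commute.neg_one_left B).pow_left i).mul_left (Nat.cast_commute _ _)
    have hsign : (-1:R)^(i+1) * (n.choose i : R)
        = -((-1:R)^i * (n.choose i : R)) := by
      rw [pow_succ, mul_neg_one, neg_mul]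
    rw [hsign, neg_mul, ← mul_assoc, c1.eq, mul_assoc]
  calc ncS A C (n+1)
      = (∑ i ∈ Finset.range (n+1),
          ((-1:R)^(i+1) * (n.choose i : R) * (B * ncP (A+1) (C+1) i)
            + (-1:R)^(i+1) * (n.choose (i+1) : R) * ncP A C (i+1)))
        + (-1:R)^0 * (((n+1).choose 0 : ℕ) : R) * ncP A C 0 := by
        rw [hsplit]
        congr 1
        exact Finset.sum_congr rfl fun i _ => hterm i
    _ = (∑ i ∈ Finset.range (n+1),
          -(B * ((-1:R)^i * (n.choose i : R) * ncP (A+1) (C+1) i)))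
        + ((∑ i ∈ Finset.range (n+1),
            (-1:R)^(i+1) * (n.choose (i+1) : R) * ncP A C (i+1))
          + (-1:R)^0 * ((n.choose 0 : ℕ) : R) * ncP A C 0) := by
        rw [Finset.sum_add_distrib]
        simp only [Nat.choose_zero_right]
        rw [add_assoc]
        congr 1
        exact Finset.sum_congr rfl fun i _ => hmove i
    _ = -(B * ncS (A+1) (C+1) n)
        + ∑ k ∈ Finset.range (n+2), (-1:R)^k * (n.choose k : R) * ncP A C k := by
        congr 1
        · rw [Finset.sum_neg_distrib, ← Finset.mul_sum]
          simp only [ncS]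
        · exact (Finset.sum_range_succ'
            (fun k => (-1:R)^k * (n.choose k : R) * ncP A C k) (n+1)).symm
    _ = -(B * ncS (A+1) (C+1) n) + ncS A C n := by
        congr 1
        rw [Finset.sum_range_succ]
        simp [Nat.choose_succ_self, ncS]
    _ = ncS A C n - B * ncS (A+1) (C+1) n := by
        rw [sub_eq_add_neg, add_comm]

lemma myInvSubInv (x : R) (hx : IsUnit x) (hx1 : IsUnit (x+1)) :
    Ring.inverse x - Ring.inverse (x+1) = Ring.inverse x * Ring.inverse (x+1) := by
  have h1 : Ring.inverse x * x = 1 := Ring.inverse_mul_cancel x hx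
  have h2 : (x+1) * Ring.inverse (x+1) = 1 := Ring.mul_inverse_cancel _ hx1
  calc Ring.inverse x - Ring.inverse (x+1)
      = Ring.inverse x * ((x+1) * Ring.inverse (x+1))
        - (Ring.inverse x * x) * Ring.inverse (x+1) := by rw [h1, h2, mul_one, one_mul]
    _ = Ring.inverse x * Ring.inverse (x+1) := by noncomm_ring

lemma claim (A C : R) : ∀ m : ℕ, (∀ j : ℕ, j ≤ m+1 → IsUnit (C + (j:R))) →
    ncQ A C m * Ring.inverse (C + (m:R))
      - Ring.inverse C * A * (ncQ (A+1) (C+1) m * Ring.inverse (C + (m:R) + 1))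
    = ncQ A C (m+1) * Ring.inverse (C + (m:R) + 1) := by
  intro m
  induction m with
  | zero =>
    intro hC
    have hu1 : IsUnit (C + 1 : R) := by
      have := hC 1 le_rfl; simpa using this
    simp only [ncQ, Nat.cast_zero, add_zero, zero_add]
    rw [opr_zero, opr_zero, opr_succ, opr_zero, one_mul, one_mul, one_mul]
    simp only [Nat.cast_zero, add_zero]
    have h : (C - A + 1 : R) = (C + 1) - A := by abel
    rw [h, mul_sub, sub_mul, mul_assoc (Ring.inverse C) (C+1),
        Ring.mul_inverse_cancel _ hu1, mul_one, mul_assoc]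
  | succ m ih =>
    intro hC
    have ih' := ih (fun j hj => hC j (by omega))
    have hum1 : IsUnit (C + (m:R) + 1) := by
      have := hC (m+1) (by omega); push_cast at this
      have e : C + ((m:R)+1) = C + (m:R) + 1 := by abel
      rwa [e] at this
    have hum2 : IsUnit (C + (m:R) + 1 + 1) := by
      have := hC (m+2) (by omega); push_cast at this
      have e : C + ((m:R)+2) = C + (m:R) + 1 + 1 := by
        rw [← one_add_one_eq_two]; abel
      rwa [e] at this
    -- normalize casts in the goal
    simp only [Nat.cast_add, Nat.cast_one]
    have ec : C + ((m:R) + 1) = C + (m:R) + 1 := by abel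
    rw [ec]
    -- raw forms of the structural facts
    have hQ1 : ncQ A C (m+1)
        = ncQ A C m * (Ring.inverse (C + (m:R)) * (C - A + (m:R) + 1)) :=
      ncQ_succ A C m
    have hQ'1 : ncQ (A+1) (C+1) (m+1)
        = ncQ (A+1) (C+1) m * (Ring.inverse (C + (m:R) + 1) * (C - A + (m:R) + 1)) := by
      rw [ncQ_shift_succ, ec]
    have hQ2 : ncQ A C (m+2)
        = ncQ A C (m+1) * (Ring.inverse (C + (m:R) + 1) * (C - A + (m:R) + 1 + 1)) := by
      rw [ncQ_succ A C (m+1)]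
      simp only [Nat.cast_add, Nat.cast_one]
      rw [ec]
      have e2 : C - A + ((m:R) + 1) + 1 = C - A + (m:R) + 1 + 1 := by abel
      rw [e2]
    have hsub : Ring.inverse (C + (m:R) + 1) - Ring.inverse (C + (m:R) + 1 + 1)
        = Ring.inverse (C + (m:R) + 1) * Ring.inverse (C + (m:R) + 1 + 1) :=
      myInvSubInv _ hum1 hum2
    set B := Ring.inverse C * A with hB
    set Qm := ncQ A C m with hQm
    set T := ncQ A C (m+1) with hT
    set Q'm := ncQ (A+1) (C+1) m with hQ'm
    set g := Ring.inverse (C + (m:R)) with hg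
    set e := Ring.inverse (C + (m:R) + 1) with he
    set f := Ring.inverse (C + (m:R) + 1 + 1) with hf
    set D1 := C - A + (m:R) + 1 with hD1
    have hBQ : B * (Q'm * e) = Qm * g - T * e := by
      rw [← ih']; abel
    rw [hQ'1, hQ2]
    calc T * e - B * (Q'm * (e * D1) * f)
        = T * e - (B * (Q'm * e)) * (D1 * f) := by noncomm_ring
      _ = T * e - (Qm * g - T * e) * (D1 * f) := by rw [hBQ]
      _ = T * e - Qm * (g * D1) * f + T * (e * D1 * f) := by noncomm_ring
      _ = T * e - T * f + T * (e * D1 * f) := by rw [← hQ1]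
      _ = T * (e - f) + T * (e * D1 * f) := by noncomm_ring
      _ = T * (e * f) + T * (e * D1 * f) := by rw [hsub]
      _ = T * (e * (D1 + 1)) * f := by noncomm_ring

lemma ncS_closed : ∀ (n : ℕ) (A C : R), (∀ m : ℕ, m ≤ n → IsUnit (C + (m:R))) →
    ncS A C (n+1) = ncQ A C n * Ring.inverse (C + (n:R)) * (C - A) := by
  intro n
  induction n with
  | zero =>
    intro A C hC
    have h0 : IsUnit C := by have := hC 0 le_rfl; simpa using this
    unfold ncS
    rw [Finset.sum_range_succ, Finset.sum_range_succ, Finset.sum_range_zero]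
    simp only [ncP, ncQ, opr_zero, opr_succ, Nat.cast_zero, add_zero, zero_add,
      pow_zero, pow_one, Nat.choose_self, Nat.choose_zero_right, Nat.cast_one,
      one_mul, mul_one, neg_mul, neg_one_mul]
    rw [mul_sub, Ring.inverse_mul_cancel C h0]
    abel
  | succ n ih =>
    intro A C hC
    have hCl : ∀ j : ℕ, j ≤ n+1 → IsUnit (C + (j:R)) := hC
    have h1 : ∀ m : ℕ, m ≤ n → IsUnit (C + (m:R)) := fun m hm => hC m (by omega)
    have h2 : ∀ m : ℕ, m ≤ n → IsUnit ((C+1) + (m:R)) := by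
      intro m hm
      have := hC (m+1) (by omega)
      have e : C + ((m+1:ℕ):R) = (C+1) + (m:R) := by push_cast; abel
      rwa [e] at this
    rw [ncS_rec, ih A C h1, ih (A+1) (C+1) h2]
    have e1 : (C+1) + (n:R) = C + (n:R) + 1 := by abel
    have e2 : (C+1) - (A+1) = C - A := by abel
    rw [e1, e2]
    simp only [Nat.cast_add, Nat.cast_one]
    have e3 : C + ((n:R) + 1) = C + (n:R) + 1 := by abel
    rw [e3]
    calc ncQ A C n * Ring.inverse (C + (n:R)) * (C - A)
          - Ring.inverse C * A * (ncQ (A+1) (C+1) n * Ring.inverse (C + (n:R) + 1) * (C - A))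
        = (ncQ A C n * Ring.inverse (C + (n:R))
            - Ring.inverse C * A * (ncQ (A+1) (C+1) n * Ring.inverse (C + (n:R) + 1))) * (C - A) := by
          noncomm_ring
      _ = ncQ A C (n+1) * Ring.inverse (C + (n:R) + 1) * (C - A) := by
          rw [claim A C n hCl]

end aux

/-- Noncommutative Chu–Vandermonde summation of type II:
`₂F₁⌊A, −nI; C; I⌉ = ⌊C−A+I; C⌉_n (C−A+nI)⁻¹ (C−A)`. -/
theorem ncChuVandermondeII {R : Type*} [Ring R] (A C : R) (n : ℕ)
    (hC : ∀ m : ℕ, m < n → IsUnit (C + (m : R)))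
    (hI : ∀ m : ℕ, m < n → IsUnit ((1 : R) + (m : R)))
    (hCA : IsUnit (C - A + (n : R))) :
    (∑ k ∈ Finset.range (n + 1),
      opr k (fun j =>
        Ring.inverse (C + (j : R)) * (A + (j : R)) *
        (Ring.inverse ((1 : R) + (j : R)) * (-(n : R) + (j : R))))) =
    opr n (fun j => Ring.inverse (C + (j : R)) * (C - A + (j : R) + 1)) *
      Ring.inverse (C - A + (n : R)) * (C - A) := by
  have hQ : opr n (fun j => Ring.inverse (C + (j : R)) * (C - A + (j : R) + 1))
      = ncQ A C n := rfl
  rw [hQ]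
  cases n with
  | zero =>
    have hCA' : IsUnit (C - A) := by simpa using hCA
    simp only [zero_add, Finset.sum_range_one, opr_zero, Nat.cast_zero, add_zero, ncQ]
    rw [one_mul]
    exact (Ring.inverse_mul_cancel _ hCA').symm
  | succ m =>
    have hsum : (∑ k ∈ Finset.range (m + 1 + 1),
        opr k (fun j =>
          Ring.inverse (C + (j : R)) * (A + (j : R)) *
          (Ring.inverse ((1 : R) + (j : R)) * (-((m+1 : ℕ) : R) + (j : R)))))
        = ncS A C (m+1) := by
      unfold ncS
      exact Finset.sum_congr rfl fun k hk =>
        term_eq A C (m+1) hI k (by have := Finset.mem_range.mp hk; omega)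
    rw [hsum, ncS_closed m A C (fun j hj => hC j (by omega))]
    have hx : IsUnit (C - A + (m:R) + 1) := by
      have := hCA
      have e : C - A + ((m+1:ℕ):R) = C - A + (m:R) + 1 := by push_cast; abel
      rwa [e] at this
    have e3 : C - A + ((m+1:ℕ):R) = C - A + (m:R) + 1 := by push_cast; abel
    rw [e3, ncQ_succ A C m]
    calc ncQ A C m * Ring.inverse (C + (m:R)) * (C - A)
        = ncQ A C m * (Ring.inverse (C + (m:R))
            * ((C - A + (m:R) + 1) * Ring.inverse (C - A + (m:R) + 1))) * (C - A) := by
          rw [Ring.mul_inverse_cancel _ hx, mul_one]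
      _ = ncQ A C m * (Ring.inverse (C + (m:R)) * (C - A + (m:R) + 1))
            * Ring.inverse (C - A + (m:R) + 1) * (C - A) := by
          noncomm_ring
end

section
/- Second noncommutative q-Chu–Vandermonde summation of type I: Let A and C be elements of a unit ring R, let Q be an invertible element of R commuting with both A and C, and let n be a nonnegative integer. Then Σ_{k=0}^{n} ⌈A, Q^{−n}; C, Q; Q, A^{−1}CQ^{n}⌋_k = ⌈A^{−1}C; C; Q, I⌋_n, i.e. the terminating noncommutative basic hypergeometric series of type I with argument A^{−1}CQ^{n}, ₂φ₁⌈A, Q^{−n}; C; Q, A^{−1}CQ^{n}⌋, equals the type I noncommutative Q-shifted factorial ⌈A^{−1}C; C; Q, I⌋_n = ∏_{j=1}^{n} (I−CQ^{n−j})^{−1}(I−A^{−1}CQ^{n−j}). -/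
section NC

variable {R : Type*} [Ring R]

theorem commute_ringInverse {x y : R} (h : Commute x y) : Commute (Ring.inverse x) y := by
  by_cases hx : IsUnit x
  · obtain ⟨u, rfl⟩ := hx
    rw [Ring.inverse_unit]
    exact (h.units_inv_left : _)
  · rw [Ring.inverse_non_unit _ hx]; exact Commute.zero_left y

theorem ringInverse_mem_centralizer {s : Set R} {x : R} (hx : x ∈ Subring.centralizer s) :
    Ring.inverse x ∈ Subring.centralizer s := by
  rw [Subring.mem_centralizer_iff] at *
  intro g hg
  exact (commute_ringInverse ((hx g hg).symm : Commute x g)).symm.eq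

/-- Descending ordered product `h (n-1) * ⋯ * h 0`. -/
def oprD (h : ℕ → R) : ℕ → R
  | 0 => 1
  | k + 1 => h k * oprD h k

theorem opr_descend (h : ℕ → R) : ∀ k, opr k (fun j => h (k - 1 - j)) = oprD h k
  | 0 => rfl
  | (k + 1) => by
    have e : (fun j => h (k + 1 - 1 - j)) ∘ Nat.succ = fun j => h (k - 1 - j) := by
      funext j
      show h (k + 1 - 1 - (j + 1)) = h (k - 1 - j)
      congr 1
      omega
    show opr (k+1) (fun j => h (k + 1 - 1 - j)) = h k * oprD h k
    unfold opr
    rw [List.range_succ_eq_map, List.map_cons, List.prod_cons, List.map_map, e]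
    rw [show k + 1 - 1 - 0 = k by omega]
    rw [← opr_descend h k]
    rfl

/-- The commutative coefficient subring: double centralizer of `{Q}`. -/
def ncK (Q : R) : Subring R := Subring.centralizer (Subring.centralizer ({Q} : Set R) : Set R)

theorem mem_cenQ {Q y : R} (hy : Commute Q y) : y ∈ Subring.centralizer ({Q} : Set R) := by
  rw [Subring.mem_centralizer_iff]
  rintro g rfl
  exact hy.eq

theorem K_commute {Q : R} (σ : ncK Q) {y : R} (hy : Commute Q y) : Commute (σ : R) y :=
  (σ.2 y (mem_cenQ hy)).symm

theorem K_commute' {Q : R} (σ : ncK Q) {y : R} (hy : Commute Q y) :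
    y * (σ : R) = (σ : R) * y := (K_commute σ hy).symm.eq

noncomputable instance ncKComm (Q : R) : CommRing (ncK Q) :=
  { (inferInstance : Ring (ncK Q)) with
    mul_comm := fun a b => by
      have hQmem : Q ∈ (Subring.centralizer ({Q} : Set R) : Set R) := mem_cenQ (Commute.refl Q)
      have hb : (b : R) ∈ Subring.centralizer ({Q} : Set R) :=
        mem_cenQ (b.2 Q hQmem : Q * (b : R) = (b : R) * Q)
      exact Subtype.ext ((a.2 b hb).symm : (a : R) * b = b * a) }

/-- `Q` as an element of the coefficient ring. -/
def qK (Q : R) : ncK Q := ⟨Q, fun g hg => (Subring.mem_centralizer_iff.mp hg Q rfl).symm⟩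

/-- `Ring.inverse (1 - Q^j)` as an element of the coefficient ring. -/
noncomputable def iK (Q : R) (j : ℕ) : ncK Q :=
  ⟨Ring.inverse (1 - Q ^ j), by
    have h : ((1 - qK Q ^ j : ncK Q) : R) ∈ ncK Q := (1 - qK Q ^ j : ncK Q).2
    have e : ((1 - qK Q ^ j : ncK Q) : R) = 1 - Q ^ j := by push_cast [qK]; ring
    rw [e] at h
    exact ringInverse_mem_centralizer h⟩

theorem iK_coe (Q : R) (j : ℕ) : (iK Q j : R) = Ring.inverse (1 - Q ^ j) := rfl

theorem qK_coe (Q : R) : (qK Q : R) = Q := rfl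

theorem iK_mul {Q : R} {j : ℕ} (h : IsUnit (1 - Q ^ j)) : iK Q j * (1 - qK Q ^ j) = 1 := by
  apply Subtype.ext
  push_cast [iK_coe, qK_coe]
  exact Ring.inverse_mul_cancel _ h

/-- The central coefficients `β n k`. -/
noncomputable def ncBeta (Q : R) (n : ℕ) : ℕ → ncK Q
  | 0 => 1
  | k + 1 => ncBeta Q n k * (iK Q (k + 1) * (qK Q ^ n - qK Q ^ k))

theorem ncBeta_top (Q : R) (n : ℕ) : ncBeta Q n (n + 1) = 0 := by
  show ncBeta Q n n * (iK Q (n + 1) * (qK Q ^ n - qK Q ^ n)) = 0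
  rw [sub_self, mul_zero, mul_zero]

/-- cross-multiplied defining relation. -/
theorem ncBeta_cross {Q : R} (n m : ℕ) (h : IsUnit (1 - Q ^ (m + 1))) :
    ncBeta Q n (m + 1) * (1 - qK Q ^ (m + 1)) = ncBeta Q n m * (qK Q ^ n - qK Q ^ m) := by
  have h1 := iK_mul (Q := Q) (j := m + 1) h
  show ncBeta Q n m * (iK Q (m + 1) * (qK Q ^ n - qK Q ^ m)) * (1 - qK Q ^ (m + 1)) = _
  linear_combination (ncBeta Q n m * (qK Q ^ n - qK Q ^ m)) * h1

/-- Pascal recurrence (i): `β (n+1) (m+1) = β n (m+1) - qⁿ · β n m`. -/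
theorem ncBeta_pascal1 {Q : R} (n : ℕ) : ∀ m : ℕ, (∀ j, j < m + 1 → IsUnit (1 - Q ^ (j + 1))) →
    ncBeta Q (n + 1) (m + 1) = ncBeta Q n (m + 1) - qK Q ^ n * ncBeta Q n m
  | 0, hq => by
    have h1 := iK_mul (Q := Q) (j := 1) (hq 0 Nat.one_pos)
    show (1 : ncK Q) * (iK Q 1 * (qK Q ^ (n+1) - qK Q ^ 0)) =
      (1 : ncK Q) * (iK Q 1 * (qK Q ^ n - qK Q ^ 0)) - qK Q ^ n * 1
    linear_combination (-(qK Q ^ n)) * h1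
  | (m + 1), hq => by
    have IH := ncBeta_pascal1 n m (fun j hj => hq j (Nat.lt_succ_of_lt hj))
    have h2 := iK_mul (Q := Q) (j := m + 2) (hq (m + 1) (Nat.lt_succ_self _))
    have hpr := ncBeta_cross (Q := Q) n m (hq m (Nat.lt_succ_of_lt (Nat.lt_succ_self _)))
    show ncBeta Q (n+1) (m+1) * (iK Q (m + 2) * (qK Q ^ (n+1) - qK Q ^ (m+1))) =
      ncBeta Q n (m+1) * (iK Q (m + 2) * (qK Q ^ n - qK Q ^ (m+1))) - qK Q ^ n * ncBeta Q n (m+1)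
    rw [IH]
    linear_combination (iK Q (m+2) * qK Q ^ (n+1)) * hpr + (-(ncBeta Q n (m+1) * qK Q ^ n)) * h2

/-- Pascal recurrence (ii): `β (n+1) (m+1) = q^(m+1) β n (m+1) - q^m β n m`. -/
theorem ncBeta_pascal2 {Q : R} (n m : ℕ) (hq : ∀ j, j < m + 1 → IsUnit (1 - Q ^ (j + 1))) :
    ncBeta Q (n + 1) (m + 1) = qK Q ^ m * qK Q * ncBeta Q n (m + 1) - qK Q ^ m * ncBeta Q n m := by
  have h1 := ncBeta_pascal1 (Q := Q) n m hq
  have hpr := ncBeta_cross (Q := Q) n m (hq m (Nat.lt_succ_self _))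
  linear_combination h1 + hpr

end NC

section Main

variable {R : Type*} [Ring R]

/-- `G k`: the noncommutative core of the `k`-th term. -/
noncomputable def ncG (A C Q : R) : ℕ → R
  | 0 => 1
  | k + 1 => Ring.inverse (1 - C * Q ^ k) *
      ((1 - A * Q ^ k) * (Ring.inverse A * (C * ncG A C Q k)))

/-- `W n`: the right-hand side product. -/
noncomputable def ncW (A C Q : R) : ℕ → R
  | 0 => 1
  | k + 1 => Ring.inverse (1 - C * Q ^ k) *
      ((1 - Ring.inverse A * C * Q ^ k) * ncW A C Q k)

theorem commute_ringInverse' {x y : R} (h : Commute y x) : Commute y (Ring.inverse x) :=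
  (commute_ringInverse h.symm).symm

variable {A C Q : R}

theorem cQG (hQA : Q * A = A * Q) (hQC : Q * C = C * Q) :
    ∀ k, Commute Q (ncG A C Q k)
  | 0 => Commute.one_right Q
  | k + 1 => by
    have cA : Commute Q A := hQA
    have cC : Commute Q C := hQC
    have c1 : Commute Q (1 - C * Q ^ k) :=
      (Commute.one_right Q).sub_right (cC.mul_right (Commute.pow_right (Commute.refl Q) k))
    have c2 : Commute Q (1 - A * Q ^ k) :=
      (Commute.one_right Q).sub_right (cA.mul_right (Commute.pow_right (Commute.refl Q) k))
    exact (commute_ringInverse' c1).mul_right (c2.mul_right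
      ((commute_ringInverse' cA).mul_right (cC.mul_right (cQG hQA hQC k))))

/-- The relation `(1 - qᵏC) G(k+1) = A⁻¹ C G k - qᵏ C G k`. -/
theorem ncG_rel (hA : IsUnit A) (hQA : Q * A = A * Q) (hQC : Q * C = C * Q)
    (k : ℕ) (hCk : IsUnit (1 - C * Q ^ k)) :
    (1 - Q ^ k * C) * ncG A C Q (k + 1)
      = Ring.inverse A * (C * ncG A C Q k) - Q ^ k * (C * ncG A C Q k) := by
  have cC : Commute Q C := hQC
  have e1 : Q ^ k * C = C * Q ^ k := (cC.pow_left k).eq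
  show (1 - Q ^ k * C) * (Ring.inverse (1 - C * Q ^ k) *
      ((1 - A * Q ^ k) * (Ring.inverse A * (C * ncG A C Q k)))) = _
  rw [e1, Ring.mul_inverse_cancel_left _ _ hCk, sub_mul, one_mul]
  congr 1
  have cQkAi : Commute (Q ^ k) (Ring.inverse A) :=
    (commute_ringInverse' (show Commute Q A from hQA)).pow_left k
  rw [mul_assoc, cQkAi.left_comm, Ring.mul_inverse_cancel_left _ _ hA]

/-- Move a coefficient-ring scalar left past an element commuting with `Q`. -/
theorem mvK {Q : R} (τ : ncK Q) {y : R} (hy : Commute Q y) (w : R) :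
    y * ((τ : R) * w) = (τ : R) * (y * w) :=
  ((K_commute τ hy).symm).left_comm w

/-- The term function appearing in the series. -/
noncomputable def hterm (A C Q : R) (n : ℕ) (e : ℕ) : R :=
  Ring.inverse (1 - C * Q ^ e) * (1 - A * Q ^ e) *
    (Ring.inverse (1 - Q * Q ^ e) * (1 - Ring.inverse (Q ^ n) * Q ^ e) *
      (Ring.inverse A * C * Q ^ n))

theorem oprD_hterm (hQ : IsUnit Q) (hA : IsUnit A) (hQA : Q * A = A * Q)
    (hQC : Q * C = C * Q) (n : ℕ) :
    ∀ k, oprD (hterm A C Q n) k = ((ncBeta Q n k : ncK Q) : R) * ncG A C Q k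
  | 0 => by
    show (1 : R) = ((1 : ncK Q) : R) * (1 : R)
    push_cast; rw [mul_one]
  | k + 1 => by
    have cA : Commute Q A := hQA
    have cC : Commute Q C := hQC
    have cAi : Commute Q (Ring.inverse A) := commute_ringInverse' cA
    have cCinv : Commute Q (Ring.inverse (1 - C * Q ^ k)) :=
      commute_ringInverse' ((Commute.one_right Q).sub_right
        (cC.mul_right (Commute.pow_right (Commute.refl Q) k)))
    have c2 : Commute Q (1 - A * Q ^ k) :=
      (Commute.one_right Q).sub_right (cA.mul_right (Commute.pow_right (Commute.refl Q) k))
    -- scalar normalization of the tail factor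
    have cQnAiC : Commute (Q ^ n) (Ring.inverse A * C) :=
      (cAi.mul_right cC).pow_left n
    have step1 : (1 - Ring.inverse (Q ^ n) * Q ^ k) * (Ring.inverse A * C * Q ^ n)
        = (Q ^ n - Q ^ k) * (Ring.inverse A * C) := by
      rw [show Ring.inverse A * C * Q ^ n = Q ^ n * (Ring.inverse A * C) from cQnAiC.symm.eq,
        ← mul_assoc, sub_mul, one_mul, mul_assoc,
        show Q ^ k * Q ^ n = Q ^ n * Q ^ k from ((Commute.refl Q).pow_pow k n).eq,
        Ring.inverse_mul_cancel_left _ _ (hQ.pow n)]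
    have step2 : hterm A C Q n k
        = Ring.inverse (1 - C * Q ^ k) * ((1 - A * Q ^ k) *
            (((iK Q (k+1) * (qK Q ^ n - qK Q ^ k) : ncK Q) : R) * (Ring.inverse A * C))) := by
      show Ring.inverse (1 - C * Q ^ k) * (1 - A * Q ^ k) *
          (Ring.inverse (1 - Q * Q ^ k) * (1 - Ring.inverse (Q ^ n) * Q ^ k) *
            (Ring.inverse A * C * Q ^ n)) = _
      rw [mul_assoc (Ring.inverse (1 - Q * Q ^ k)), step1, ← pow_succ']
      have : ((iK Q (k+1) * (qK Q ^ n - qK Q ^ k) : ncK Q) : R)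
          = Ring.inverse (1 - Q ^ (k+1)) * (Q ^ n - Q ^ k) := by
        push_cast [iK_coe, qK_coe]; ring_nf
      rw [this]
      noncomm_ring
    rw [oprD, oprD_hterm hQ hA hQA hQC n k, step2]
    rw [show ncG A C Q (k+1) = Ring.inverse (1 - C * Q ^ k) *
        ((1 - A * Q ^ k) * (Ring.inverse A * (C * ncG A C Q k))) from rfl]
    have brec : ((ncBeta Q n (k+1) : ncK Q) : R)
        = ((ncBeta Q n k : ncK Q) : R) * ((iK Q (k+1) * (qK Q ^ n - qK Q ^ k) : ncK Q) : R) := by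
      rw [show (ncBeta Q n (k+1) : ncK Q)
        = ncBeta Q n k * (iK Q (k+1) * (qK Q ^ n - qK Q ^ k)) from rfl, Subring.coe_mul]
    rw [brec]
    have cQb : Commute Q ((ncBeta Q n k : ncK Q) : R) :=
      (K_commute _ (Commute.refl Q)).symm
    have cQs : Commute Q ((iK Q (k+1) * (qK Q ^ n - qK Q ^ k) : ncK Q) : R) :=
      (K_commute _ (Commute.refl Q)).symm
    simp only [mul_assoc]
    rw [mvK (ncBeta Q n k) cC, mvK (ncBeta Q n k) cAi, mvK (ncBeta Q n k) cQs,
      mvK (ncBeta Q n k) c2, mvK (ncBeta Q n k) cCinv,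
      mvK (iK Q (k+1) * (qK Q ^ n - qK Q ^ k)) c2,
      mvK (iK Q (k+1) * (qK Q ^ n - qK Q ^ k)) cCinv]

theorem perk {Q : R} (s u t p r b : ncK Q) (X Y Z : R)
    (hb1 : b = p - s * r) (hb2 : b = u * t * p - u * r) :
    (b : R) * (X - (s : R) * Y) - (p : R) * (X - (s : R) * Z)
      = -((s : R) * ((r : R) * (X - (u : R) * Y)))
        + (s : R) * ((p : R) * (Z - (u : R) * ((t : R) * Y))) := by
  have k1 : b - p + s * r = (0 : ncK Q) := by linear_combination hb1
  have k2 : s * (p * (u * t)) - b * s - s * (r * u) = (0 : ncK Q) := by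
    linear_combination (-s) * hb2
  have k3 : p * s - s * p = (0 : ncK Q) := by ring
  rw [← sub_eq_zero]
  have expand : (b : R) * (X - (s : R) * Y) - (p : R) * (X - (s : R) * Z)
      - (-((s : R) * ((r : R) * (X - (u : R) * Y)))
        + (s : R) * ((p : R) * (Z - (u : R) * ((t : R) * Y))))
      = ((b - p + s * r : ncK Q) : R) * X
        + ((s * (p * (u * t)) - b * s - s * (r * u) : ncK Q) : R) * Y
        + ((p * s - s * p : ncK Q) : R) * Z := by
    push_cast
    noncomm_ring
  rw [expand, k1, k2, k3]
  push_cast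
  simp

/-- The telescoping function. -/
noncomputable def ncc (A C Q : R) (n : ℕ) : ℕ → R
  | 0 => 0
  | k + 1 => -(Q ^ n * (((ncBeta Q n k : ncK Q) : R) *
      (ncG A C Q (k + 1) - Q ^ k * (C * ncG A C Q (k + 1)))))

theorem key (hQ : IsUnit Q) (hA : IsUnit A) (hQA : Q * A = A * Q) (hQC : Q * C = C * Q)
    (n : ℕ) (hC : ∀ m, m < n + 1 → IsUnit (1 - C * Q ^ m))
    (hq : ∀ m, m < n + 1 → IsUnit (1 - Q ^ (m + 1))) :
    (1 - Q ^ n * C) *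
        (∑ k ∈ Finset.range (n + 2), ((ncBeta Q (n + 1) k : ncK Q) : R) * ncG A C Q k)
      = (1 - Q ^ n * (Ring.inverse A * C)) *
        (∑ k ∈ Finset.range (n + 1), ((ncBeta Q n k : ncK Q) : R) * ncG A C Q k) := by
  have cA : Commute Q A := hQA
  have cC : Commute Q C := hQC
  have cAi : Commute Q (Ring.inverse A) := commute_ringInverse' cA
  have cL : Commute Q (1 - Q ^ n * C) :=
    (Commute.one_right Q).sub_right ((Commute.pow_right (Commute.refl Q) n).mul_right cC)
  have cR : Commute Q (1 - Q ^ n * (Ring.inverse A * C)) :=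
    (Commute.one_right Q).sub_right
      ((Commute.pow_right (Commute.refl Q) n).mul_right (cAi.mul_right cC))
  rw [Finset.mul_sum, Finset.mul_sum]
  have eL : ∀ k, (1 - Q ^ n * C) * (((ncBeta Q (n + 1) k : ncK Q) : R) * ncG A C Q k)
      = ((ncBeta Q (n + 1) k : ncK Q) : R) * ((1 - Q ^ n * C) * ncG A C Q k) :=
    fun k => mvK _ cL _
  have eR : ∀ k, (1 - Q ^ n * (Ring.inverse A * C)) *
        (((ncBeta Q n k : ncK Q) : R) * ncG A C Q k)
      = ((ncBeta Q n k : ncK Q) : R) * ((1 - Q ^ n * (Ring.inverse A * C)) * ncG A C Q k) :=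
    fun k => mvK _ cR _
  simp only [eL, eR]
  -- extend the right sum to range (n+2)
  have topzero : ((ncBeta Q n (n + 1) : ncK Q) : R) *
      ((1 - Q ^ n * (Ring.inverse A * C)) * ncG A C Q (n + 1)) = 0 := by
    rw [ncBeta_top]; push_cast; rw [zero_mul]
  rw [show (∑ k ∈ Finset.range (n + 1), ((ncBeta Q n k : ncK Q) : R) *
        ((1 - Q ^ n * (Ring.inverse A * C)) * ncG A C Q k))
      = ∑ k ∈ Finset.range (n + 2), ((ncBeta Q n k : ncK Q) : R) *
        ((1 - Q ^ n * (Ring.inverse A * C)) * ncG A C Q k) from by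
    conv_rhs => rw [Finset.sum_range_succ]
    rw [topzero, add_zero]]
  rw [← sub_eq_zero, ← Finset.sum_sub_distrib]
  have percase : ∀ k ∈ Finset.range (n + 2),
      ((ncBeta Q (n + 1) k : ncK Q) : R) * ((1 - Q ^ n * C) * ncG A C Q k)
        - ((ncBeta Q n k : ncK Q) : R) * ((1 - Q ^ n * (Ring.inverse A * C)) * ncG A C Q k)
      = ncc A C Q n k - ncc A C Q n (k + 1) := by
    intro k hk
    rw [Finset.mem_range] at hk
    have t1 : ∀ j, (1 - Q ^ n * C) * ncG A C Q j
        = ncG A C Q j - Q ^ n * (C * ncG A C Q j) := fun j => by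
      rw [sub_mul, one_mul, mul_assoc]
    have t2 : ∀ j, (1 - Q ^ n * (Ring.inverse A * C)) * ncG A C Q j
        = ncG A C Q j - Q ^ n * (Ring.inverse A * (C * ncG A C Q j)) := fun j => by
      rw [sub_mul, one_mul, mul_assoc, mul_assoc]
    match k, hk with
    | 0, _ =>
      have g1 : ncG A C Q 1 - Q ^ 0 * (C * ncG A C Q 1)
          = Ring.inverse A * (C * ncG A C Q 0) - Q ^ 0 * (C * ncG A C Q 0) := by
        have h := ncG_rel hA hQA hQC 0 (hC 0 (by omega))
        rw [sub_mul, one_mul, mul_assoc] at h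
        exact h
      show _ = 0 - ncc A C Q n 1
      rw [show ncc A C Q n 1 = -(Q ^ n * (((ncBeta Q n 0 : ncK Q) : R) *
          (ncG A C Q 1 - Q ^ 0 * (C * ncG A C Q 1)))) from rfl]
      rw [g1, show (ncBeta Q (n+1) 0 : ncK Q) = 1 from rfl,
        show (ncBeta Q n 0 : ncK Q) = 1 from rfl, show ncG A C Q 0 = 1 from rfl]
      push_cast
      simp only [pow_zero, one_mul, mul_one, zero_sub, neg_neg]
      noncomm_ring
    | (m+1), hk =>
      by_cases hm : m < n
      · have hb1 := ncBeta_pascal1 (Q := Q) n m (fun j hj => hq j (by omega))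
        have hb2 := ncBeta_pascal2 (Q := Q) n m (fun j hj => hq j (by omega))
        have hperk := perk (qK Q ^ n) (qK Q ^ m) (qK Q) (ncBeta Q n (m+1)) (ncBeta Q n m)
          (ncBeta Q (n+1) (m+1)) (ncG A C Q (m+1)) (C * ncG A C Q (m+1))
          (Ring.inverse A * (C * ncG A C Q (m+1))) hb1 hb2
        push_cast [qK_coe] at hperk
        have grel : ncG A C Q (m+2) - Q ^ (m+1) * (C * ncG A C Q (m+2))
            = Ring.inverse A * (C * ncG A C Q (m+1))
              - Q ^ (m+1) * (C * ncG A C Q (m+1)) := by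
          have h := ncG_rel hA hQA hQC (m+1) (hC (m+1) (by omega))
          rw [sub_mul, one_mul, mul_assoc] at h
          exact h
        rw [show ncc A C Q n (m+1) = -(Q ^ n * (((ncBeta Q n m : ncK Q) : R) *
            (ncG A C Q (m+1) - Q ^ m * (C * ncG A C Q (m+1))))) from rfl,
          show ncc A C Q n (m+1+1) = -(Q ^ n * (((ncBeta Q n (m+1) : ncK Q) : R) *
            (ncG A C Q (m+2) - Q ^ (m+1) * (C * ncG A C Q (m+2))))) from rfl,
          grel, t1, t2, sub_neg_eq_add, pow_succ, mul_assoc (Q ^ m) Q]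
        exact hperk
      · have hmn : m = n := by omega
        subst hmn
        have hb1 := ncBeta_pascal1 (Q := Q) m m (fun j hj => hq j (by omega))
        rw [ncBeta_top] at hb1
        rw [show ncc A C Q m (m+1) = -(Q ^ m * (((ncBeta Q m m : ncK Q) : R) *
            (ncG A C Q (m+1) - Q ^ m * (C * ncG A C Q (m+1))))) from rfl,
          show ncc A C Q m (m+1+1) = -(Q ^ m * (((ncBeta Q m (m+1) : ncK Q) : R) *
            (ncG A C Q (m+2) - Q ^ (m+1) * (C * ncG A C Q (m+2))))) from rfl,
          ncBeta_top, hb1, t1, t2]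
        push_cast [qK_coe]
        simp only [zero_sub, zero_mul, mul_zero, neg_zero, sub_zero, neg_mul, neg_inj,
          sub_neg_eq_add, neg_neg]
        rw [mul_assoc]
  rw [Finset.sum_congr rfl percase, Finset.sum_range_sub' (ncc A C Q n) (n + 2)]
  show (0 : R) - ncc A C Q n (n + 2) = 0
  rw [show ncc A C Q n (n + 2) = -(Q ^ n * (((ncBeta Q n (n + 1) : ncK Q) : R) *
      (ncG A C Q (n + 2) - Q ^ (n + 1) * (C * ncG A C Q (n + 2))))) from rfl, ncBeta_top]
  push_cast
  simp

end Main

section Final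

variable {R : Type*} [Ring R] {A C Q : R}

theorem main_sum (hQ : IsUnit Q) (hA : IsUnit A) (hQA : Q * A = A * Q) (hQC : Q * C = C * Q) :
    ∀ n : ℕ, (∀ m, m < n → IsUnit (1 - C * Q ^ m)) → (∀ m, m < n → IsUnit (1 - Q ^ (m + 1))) →
    (∑ k ∈ Finset.range (n + 1), ((ncBeta Q n k : ncK Q) : R) * ncG A C Q k) = ncW A C Q n
  | 0, _, _ => by
    rw [Finset.sum_range_one, show (ncBeta Q 0 0 : ncK Q) = 1 from rfl,
      show ncG A C Q 0 = 1 from rfl, show ncW A C Q 0 = 1 from rfl]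
    push_cast
    rw [one_mul]
  | (n + 1), hC, hq => by
    have cC : Commute Q C := hQC
    have cAi : Commute Q (Ring.inverse A) := commute_ringInverse' (show Commute Q A from hQA)
    have IH := main_sum hQ hA hQA hQC n (fun m hm => hC m (Nat.lt_succ_of_lt hm))
      (fun m hm => hq m (Nat.lt_succ_of_lt hm))
    have hkey := key hQ hA hQA hQC n hC hq
    rw [IH] at hkey
    have e0 : (1 : R) - Q ^ n * C = 1 - C * Q ^ n := by rw [(cC.pow_left n).eq]
    rw [e0] at hkey
    have hCn : IsUnit (1 - C * Q ^ n) := hC n (Nat.lt_succ_self n)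
    have step := congrArg (fun z => Ring.inverse (1 - C * Q ^ n) * z) hkey
    simp only [Ring.inverse_mul_cancel_left _ _ hCn] at step
    have e1 : (1 : R) - Q ^ n * (Ring.inverse A * C) = 1 - Ring.inverse A * C * Q ^ n := by
      rw [((cAi.mul_right cC).pow_left n).eq]
    rw [step, e1]
    rfl

theorem oprD_W : ∀ k, oprD (fun e => Ring.inverse (1 - C * Q ^ e) *
    (1 - Ring.inverse A * C * Q ^ e)) k = ncW A C Q k
  | 0 => rfl
  | (k + 1) => by
    rw [oprD, oprD_W k, show ncW A C Q (k + 1) = Ring.inverse (1 - C * Q ^ k) *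
      ((1 - Ring.inverse A * C * Q ^ k) * ncW A C Q k) from rfl, mul_assoc]

end Final

/-- Second noncommutative q-Chu–Vandermonde summation of type I:
`₂φ₁⌈A, Q⁻ⁿ; C; Q, A⁻¹CQⁿ⌋ = ⌈A⁻¹C; C; Q, I⌋_n`. -/
theorem ncQChuVandermonde2I {R : Type*} [Ring R] (A C Q : R) (n : ℕ)
    (hQ : IsUnit Q) (hA : IsUnit A)
    (hQA : Q * A = A * Q) (hQC : Q * C = C * Q)
    (hC : ∀ m : ℕ, m < n → IsUnit (1 - C * Q ^ m))
    (hq : ∀ m : ℕ, m < n → IsUnit (1 - Q ^ (m + 1))) :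
    (∑ k ∈ Finset.range (n + 1),
      opr k (fun j =>
        Ring.inverse (1 - C * Q ^ (k - 1 - j)) * (1 - A * Q ^ (k - 1 - j)) *
        (Ring.inverse (1 - Q * Q ^ (k - 1 - j)) *
          (1 - Ring.inverse (Q ^ n) * Q ^ (k - 1 - j)) *
          (Ring.inverse A * C * Q ^ n)))) =
    opr n (fun j =>
      Ring.inverse (1 - C * Q ^ (n - 1 - j)) *
        (1 - Ring.inverse A * C * Q ^ (n - 1 - j))) := by
  have lhs_eq : ∀ k, opr k (fun j =>
      Ring.inverse (1 - C * Q ^ (k - 1 - j)) * (1 - A * Q ^ (k - 1 - j)) *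
        (Ring.inverse (1 - Q * Q ^ (k - 1 - j)) *
          (1 - Ring.inverse (Q ^ n) * Q ^ (k - 1 - j)) *
          (Ring.inverse A * C * Q ^ n)))
      = ((ncBeta Q n k : ncK Q) : R) * ncG A C Q k := fun k => by
    rw [show (fun j => Ring.inverse (1 - C * Q ^ (k - 1 - j)) * (1 - A * Q ^ (k - 1 - j)) *
        (Ring.inverse (1 - Q * Q ^ (k - 1 - j)) *
          (1 - Ring.inverse (Q ^ n) * Q ^ (k - 1 - j)) *
          (Ring.inverse A * C * Q ^ n))) = (fun j => hterm A C Q n (k - 1 - j)) from rfl,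
      opr_descend (hterm A C Q n) k, oprD_hterm hQ hA hQA hQC n k]
  rw [Finset.sum_congr rfl (fun k _ => lhs_eq k), main_sum hQ hA hQA hQC n hC hq,
    show (fun j => Ring.inverse (1 - C * Q ^ (n - 1 - j)) *
        (1 - Ring.inverse A * C * Q ^ (n - 1 - j)))
      = (fun j => (fun e => Ring.inverse (1 - C * Q ^ e) *
        (1 - Ring.inverse A * C * Q ^ e)) (n - 1 - j)) from rfl,
    opr_descend (fun e => Ring.inverse (1 - C * Q ^ e) *
      (1 - Ring.inverse A * C * Q ^ e)) n, oprD_W n]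
end
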